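/- If W_c and W_o are positive definite Hermitian n×n matrices whose product W_c W_o has distinct eigenvalues, then there exists an invertible matrix T such that T⁻¹ W_c (T†)⁻¹ = T† W_o T = Σ, where Σ is a diagonal matrix whose diagonal entries are the positive square roots of the eigenvalues of W_c W_o (a balancing transformation exists). -/

import Mathlib

/-!
Write `W_c = L Lᴴ` with `L = W_c^{1/2}` invertible. The matrix `Lᴴ W_o L` is positive definite,
so a unitary `U` diagonalizes it with positive eigenvalues `σᵢ²`; these are also the eigenvalues of
`W_c W_o = L (Lᴴ W_o)`, since `AB` and `BA` have the same characteristic polynomial.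
With `S = L U` we get `S Sᴴ = W_c` and `Sᴴ W_o S = diag(σ²)`, and rescaling by
`T = S diag(σ)^{-1/2}` splits `diag(σ²)` evenly between the two gramians:
`Tᴴ W_o T = diag(σ)` and `T diag(σ) Tᴴ = W_c`.
-/

open Matrix Polynomial
open scoped ComplexOrder

namespace Matrix

variable {n 𝕜 : Type*} [Fintype n] [DecidableEq n] [RCLike 𝕜]

open scoped MatrixOrder in
theorem PosDef.exists_isUnit_mul_conjTranspose_eq {A : Matrix n n 𝕜} (hA : A.PosDef) :
    ∃ L : Matrix n n 𝕜, IsUnit L ∧ L * Lᴴ = A := by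
  refine ⟨CFC.sqrt A, hA.isStrictlyPositive.isUnit_cfcSqrt, ?_⟩
  rw [← star_eq_conjTranspose, (CFC.sqrt_nonneg A).isSelfAdjoint.star_eq,
    CFC.sqrt_mul_sqrt_self A hA.posSemidef.nonneg]

theorem PosDef.exists_simultaneous_diagonalization {Wc Wo : Matrix n n 𝕜} (hWc : Wc.PosDef)
    (hWo : Wo.PosDef) :
    ∃ (S : Matrix n n 𝕜) (ev : n → ℝ), IsUnit S ∧ (∀ i, 0 < ev i) ∧ S * Sᴴ = Wc ∧
      Sᴴ * Wo * S = diagonal (fun i => (ev i : 𝕜)) ∧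
      (Wc * Wo).charpoly = ∏ i, (X - C (ev i : 𝕜)) := by
  obtain ⟨L, hL, rfl⟩ := hWc.exists_isUnit_mul_conjTranspose_eq
  have hM : (Lᴴ * Wo * L).PosDef :=
    hWo.conjTranspose_mul_mul_same (mulVec_injective_iff_isUnit.mpr hL)
  obtain ⟨U, hU⟩ : ∃ U : unitaryGroup n 𝕜, star (U : Matrix n n 𝕜) * (Lᴴ * Wo * L) *
      (U : Matrix n n 𝕜) = diagonal (fun i => (hM.1.eigenvalues i : 𝕜)) :=
    ⟨_, by simpa [Function.comp_def] using hM.1.conjStarAlgAut_star_eigenvectorUnitary⟩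
  refine ⟨L * (U : Matrix n n 𝕜), hM.1.eigenvalues, hL.mul Unitary.isUnit_coe,
    hM.eigenvalues_pos, ?_, ?_, ?_⟩
  · rw [conjTranspose_mul, ← star_eq_conjTranspose, mul_assoc, ← mul_assoc (U : Matrix n n 𝕜),
      Unitary.mul_star_self_of_mem U.2, one_mul]
  · rw [conjTranspose_mul, ← star_eq_conjTranspose, ← hU]
    simp only [mul_assoc]
  · rw [mul_assoc]
    exact (charpoly_mul_comm _ _).trans hM.1.charpoly_eq

theorem exists_balancing_of_conjTranspose_mul_mul_eq_diagonal {S W : Matrix n n 𝕜} {d : n → ℝ}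
    (hS : IsUnit S) (hd : ∀ i, 0 < d i)
    (hSW : Sᴴ * W * S = diagonal (fun i => (d i : 𝕜) ^ 2)) :
    ∃ T : Matrix n n 𝕜, IsUnit T ∧ T⁻¹ * (S * Sᴴ) * (Tᴴ)⁻¹ = diagonal (fun i => (d i : 𝕜)) ∧
      Tᴴ * W * T = diagonal (fun i => (d i : 𝕜)) := by
  set E : Matrix n n 𝕜 := diagonal fun i => ((√(d i))⁻¹ : ℝ)
  have hE : Eᴴ = E := by simp [E]
  have hEu : IsUnit E := by
    simp [E, isUnit_diagonal, Pi.isUnit_iff, fun i => (Real.sqrt_pos.2 (hd i)).ne']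
  have hs : ∀ i, (√(d i))⁻¹ ^ 2 * d i = 1 := fun i => by
    rw [inv_pow, Real.sq_sqrt (hd i).le, inv_mul_cancel₀ (hd i).ne']
  have hEDE : E * diagonal (fun i => (d i : 𝕜)) * E = 1 := by
    rw [diagonal_mul_diagonal, diagonal_mul_diagonal, ← diagonal_one]
    congr 1; funext i
    norm_cast
    linear_combination hs i
  have hED2E : E * diagonal (fun i => (d i : 𝕜) ^ 2) * E = diagonal (fun i => (d i : 𝕜)) := by
    rw [diagonal_mul_diagonal, diagonal_mul_diagonal]
    congr 1; funext i
    norm_cast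
    linear_combination d i * hs i
  have hT : IsUnit (S * E) := hS.mul hEu
  have hTdet := (isUnit_iff_isUnit_det _).mp hT
  refine ⟨S * E, hT, ?_, ?_⟩
  · have hSS : S * Sᴴ = S * E * diagonal (fun i => (d i : 𝕜)) * (S * E)ᴴ := by
      rw [conjTranspose_mul, hE, ← mul_assoc, mul_assoc S E, mul_assoc S (E * _), hEDE, mul_one]
    rw [hSS, mul_assoc (S * E), nonsing_inv_mul_cancel_left _ _ hTdet,
      mul_nonsing_inv_cancel_right _ _ (by rwa [det_conjTranspose, isUnit_star])]
  · rw [conjTranspose_mul, hE, ← hED2E, ← hSW]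
    simp only [mul_assoc]

end Matrix

theorem balancing_transformation_exists_general
    (n : ℕ) (Wc Wo : Matrix (Fin n) (Fin n) ℂ)
    (hWc : Wc.PosDef) (hWo : Wo.PosDef) :
    ∃ (T : Matrix (Fin n) (Fin n) ℂ) (d : Fin n → ℝ),
      IsUnit T.det ∧
      (∀ i, 0 < d i) ∧
      T⁻¹ * Wc * (Tᴴ)⁻¹ = Matrix.diagonal (fun i => (d i : ℂ)) ∧
      Tᴴ * Wo * T = Matrix.diagonal (fun i => (d i : ℂ)) ∧
      (Wc * Wo).charpoly =
        ∏ i : Fin n, (Polynomial.X - Polynomial.C ((d i : ℂ) ^ 2)) := by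
  obtain ⟨S, ev, hS, hev, rfl, hSWS, hchar⟩ := hWc.exists_simultaneous_diagonalization hWo
  rw [RCLike.ofReal_eq_complex_ofReal] at hSWS hchar
  have hd : ∀ i, 0 < √(ev i) := fun i => Real.sqrt_pos.2 (hev i)
  have hd2 : ∀ i, ((√(ev i) : ℝ) : ℂ) ^ 2 = ev i := fun i => by
    rw [← Complex.ofReal_pow, Real.sq_sqrt (hev i).le]
  obtain ⟨T, hT, hWcT, hWoT⟩ :=
    exists_balancing_of_conjTranspose_mul_mul_eq_diagonal (W := Wo) hS hd
      (by rw [RCLike.ofReal_eq_complex_ofReal]; simpa only [hd2] using hSWS)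
  exact ⟨T, fun i => √(ev i), (isUnit_iff_isUnit_det T).mp hT, hd, hWcT, hWoT,
    by simpa only [hd2] using hchar⟩

/-- If `W_c`, `W_o` are Hermitian positive definite and `W_c W_o` has distinct eigenvalues,
then there exists a balancing transformation: an invertible `T` with
`T⁻¹ W_c (Tᴴ)⁻¹ = Tᴴ W_o T = Σ`, where `Σ` is diagonal with strictly positive entries
whose squares are precisely the eigenvalues (with multiplicity) of `W_c W_o`. -/
theorem balancing_transformation_exists
    (n : ℕ) (Wc Wo : Matrix (Fin n) (Fin n) ℂ)
    (hWc : Wc.PosDef) (hWo : Wo.PosDef)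
    (hdistinct : (Wc * Wo).charpoly.roots.Nodup) :
    ∃ (T : Matrix (Fin n) (Fin n) ℂ) (d : Fin n → ℝ),
      IsUnit T.det ∧
      (∀ i, 0 < d i) ∧
      T⁻¹ * Wc * (Tᴴ)⁻¹ = Matrix.diagonal (fun i => (d i : ℂ)) ∧
      Tᴴ * Wo * T = Matrix.diagonal (fun i => (d i : ℂ)) ∧
      (Wc * Wo).charpoly =
        ∏ i : Fin n, (Polynomial.X - Polynomial.C ((d i : ℂ) ^ 2)) :=
  balancing_transformation_exists_general n Wc Wo hWc hWo
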